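/- (Proposition: conformal symmetry) Let X be the vector field on ℝ³ with components X(x,y,z) = (x, y, z) (the spatial part of X = −t∂/∂t + x∂/∂x + y∂/∂y + z∂/∂z). Then the Lie derivatives satisfy L_X π1 = −π1, L_X π2 = −π2, L_X H1 = 2H1 and L_X H2 = 2H2, where for a matrix-valued field π the Lie derivative is given componentwise by (L_X π)^{ij}(p) = Σ_k [X^k(p) ∂_k π^{ij}(p) − π^{kj}(p) ∂_k X^i(p) − π^{ik}(p) ∂_k X^j(p)], and for a function H, L_X H(p) = Σ_k X^k(p) ∂_k H(p). -/

import Mathlib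

/-!
`X` is the Euler vector field: `∂ₖXⁱ = δₖⁱ`, so `(L_X π)ⁱʲ(p) = Dπⁱʲ(p) p − 2 πⁱʲ(p)` and
`L_X H(p) = DH(p) p`. By Euler's identity `Df(p) p = n f(p)` for `f` homogeneous of degree `n`,
a bivector with linear coefficients (`π₁`, `π₂`) has `L_X π = (1 − 2) π = −π`, and a quadratic
function (`H₁`, `H₂`) has `L_X H = 2 H`.
-/

/-- Componentwise Lie derivative of a matrix-valued field `π` along a vector field `X`:
`(L_X π)^{ij}(p) = Σ_k [X^k(p) ∂_k π^{ij}(p) − π^{kj}(p) ∂_k X^i(p) − π^{ik}(p) ∂_k X^j(p)]`. -/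
noncomputable def matLieDeriv (X : (Fin 3 → ℝ) → (Fin 3 → ℝ))
    (π : (Fin 3 → ℝ) → Matrix (Fin 3) (Fin 3) ℝ) (p : Fin 3 → ℝ) :
    Matrix (Fin 3) (Fin 3) ℝ :=
  Matrix.of fun i j => ∑ k,
    (X p k * fderiv ℝ (fun q => π q i j) p (Pi.single k 1)
      - π p k j * fderiv ℝ (fun q => X q i) p (Pi.single k 1)
      - π p i k * fderiv ℝ (fun q => X q j) p (Pi.single k 1))

/-- Lie derivative of a function `H` along a vector field `X`:
`(L_X H)(p) = Σ_k X^k(p) ∂_k H(p)`. -/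
noncomputable def funLieDeriv (X : (Fin 3 → ℝ) → (Fin 3 → ℝ))
    (H : (Fin 3 → ℝ) → ℝ) (p : Fin 3 → ℝ) : ℝ :=
  ∑ k, X p k * fderiv ℝ H p (Pi.single k 1)

theorem sum_mul_apply_single {R ι : Type*} [CommSemiring R] [TopologicalSpace R] [Fintype ι]
    [DecidableEq ι] (L : (ι → R) →L[R] R) (v : ι → R) :
    ∑ k, v k * L (Pi.single k 1) = L v := by
  conv_rhs => rw [← Finset.univ_sum_single v, map_sum]
  simp_rw [← smul_eq_mul, ← map_smul, ← Pi.single_smul, smul_eq_mul, mul_one]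

theorem fderiv_apply_self_of_homogeneous {E F : Type*} [NormedAddCommGroup E] [NormedSpace ℝ E]
    [NormedAddCommGroup F] [NormedSpace ℝ F] {f : E → F} {p : E} (n : ℕ)
    (hf : DifferentiableAt ℝ f p) (hom : ∀ t : ℝ, f (t • p) = t ^ n • f p) :
    fderiv ℝ f p p = (n : ℝ) • f p := by
  have along_ray : HasDerivAt (fun t : ℝ => f (t • p)) (fderiv ℝ f p p) 1 := by
    have hf' : HasFDerivAt f (fderiv ℝ f p) ((1 : ℝ) • p) := by rw [one_smul]; exact hf.hasFDerivAt
    simpa [Function.comp_def] using hf'.comp_hasDerivAt 1 ((hasDerivAt_id' (1 : ℝ)).smul_const p)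
  have power : HasDerivAt (fun t : ℝ => f (t • p)) ((n : ℝ) • f p) 1 := by
    simpa [hom] using (hasDerivAt_pow n (1 : ℝ)).smul_const (f p)
  exact along_ray.unique power

theorem fderiv_coord_apply {𝕜 ι : Type*} [NontriviallyNormedField 𝕜] [Fintype ι] (i : ι)
    (p v : ι → 𝕜) : fderiv 𝕜 (fun q : ι → 𝕜 => q i) p v = v i := by
  rw [(hasFDerivAt_apply i p).fderiv]; rfl

theorem funLieDeriv_id_of_homogeneous {H : (Fin 3 → ℝ) → ℝ} (n : ℕ) (hH : Differentiable ℝ H)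
    (hom : ∀ (t : ℝ) p, H (t • p) = t ^ n * H p) (p : Fin 3 → ℝ) :
    funLieDeriv id H p = n * H p := by
  rw [funLieDeriv]
  simp only [id, sum_mul_apply_single]
  exact fderiv_apply_self_of_homogeneous n (hH p) (hom · p)

theorem matLieDeriv_id_of_homogeneous {π : (Fin 3 → ℝ) → Matrix (Fin 3) (Fin 3) ℝ} (n : ℕ)
    (hπ : ∀ i j, Differentiable ℝ fun q => π q i j)
    (hom : ∀ (t : ℝ) p, π (t • p) = t ^ n • π p) (p : Fin 3 → ℝ) :
    matLieDeriv id π p = ((n : ℝ) - 2) • π p := by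
  ext i j
  have euler : fderiv ℝ (fun q => π q i j) p p = n * π p i j :=
    fderiv_apply_self_of_homogeneous n (hπ i j p) fun t => by simp [hom]
  simp only [matLieDeriv, Matrix.of_apply, Matrix.smul_apply, smul_eq_mul, id_eq, fderiv_coord_apply,
    Pi.single_apply, mul_ite, mul_one, mul_zero, Finset.sum_sub_distrib, sum_mul_apply_single,
    Finset.sum_ite_eq, Finset.mem_univ, if_true, euler]
  ring

theorem X_conformal_symmetry (a b c : ℝ)
    (X : (Fin 3 → ℝ) → (Fin 3 → ℝ)) (hX : ∀ p, X p = p)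
    (π₁ π₂ : (Fin 3 → ℝ) → Matrix (Fin 3) (Fin 3) ℝ)
    (hπ₁ : ∀ p, π₁ p = !![0, -(p 1) / 2, p 2 / 2;
                          p 1 / 2, 0, 0;
                          -(p 2) / 2, 0, 0])
    (hπ₂ : ∀ p, π₂ p = !![0, c * p 0, b * p 0;
                          -(c * p 0), 0, a * p 0 - b * p 1 + c * p 2;
                          -(b * p 0), -(a * p 0 - b * p 1 + c * p 2), 0])
    (H₁ H₂ : (Fin 3 → ℝ) → ℝ)
    (hH₁ : ∀ p, H₁ p = p 1 * p 2)
    (hH₂ : ∀ p, H₂ p = p 0 * (a * p 0 - 2 * b * p 1 + 2 * c * p 2)) :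
    (∀ p, matLieDeriv X π₁ p = -(π₁ p))
    ∧ (∀ p, matLieDeriv X π₂ p = -(π₂ p))
    ∧ (∀ p, funLieDeriv X H₁ p = 2 * H₁ p)
    ∧ (∀ p, funLieDeriv X H₂ p = 2 * H₂ p) := by
  obtain rfl : X = id := funext hX
  obtain rfl : π₁ = _ := funext hπ₁
  obtain rfl : π₂ = _ := funext hπ₂
  obtain rfl : H₁ = _ := funext hH₁
  obtain rfl : H₂ = _ := funext hH₂
  refine ⟨fun p => ?_, fun p => ?_, fun p => ?_, fun p => ?_⟩
  · rw [matLieDeriv_id_of_homogeneous 1 (fun i j => ?_) (fun t q => ?_)]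
    · norm_num
    · fin_cases i <;> fin_cases j <;>
        simp only [Fin.zero_eta, Fin.mk_one, Fin.reduceFinMk, Matrix.of_apply, Matrix.cons_val_zero,
          Matrix.cons_val_one, Matrix.cons_val_two, Matrix.head_cons, Matrix.tail_cons] <;> fun_prop
    · simp only [Matrix.smul_of, Matrix.smul_cons, Matrix.smul_empty, Pi.smul_apply, smul_eq_mul,
        pow_one]
      ring_nf
  · rw [matLieDeriv_id_of_homogeneous 1 (fun i j => ?_) (fun t q => ?_)]
    · norm_num
    · fin_cases i <;> fin_cases j <;>
        simp only [Fin.zero_eta, Fin.mk_one, Fin.reduceFinMk, Matrix.of_apply, Matrix.cons_val_zero,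
          Matrix.cons_val_one, Matrix.cons_val_two, Matrix.head_cons, Matrix.tail_cons] <;> fun_prop
    · simp only [Matrix.smul_of, Matrix.smul_cons, Matrix.smul_empty, Pi.smul_apply, smul_eq_mul,
        pow_one]
      ring_nf
  · rw [funLieDeriv_id_of_homogeneous 2 (by fun_prop)
      (fun t q => by simp only [Pi.smul_apply, smul_eq_mul]; ring)]
    norm_num
  · rw [funLieDeriv_id_of_homogeneous 2 (by fun_prop)
      (fun t q => by simp only [Pi.smul_apply, smul_eq_mul]; ring)]
    norm_num
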